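/- For pairwise distinct nonzero real numbers λ_1, …, λ_n, the basic separable potential of level -1 satisfies V_r^{(-1)} := ∑_{i=1}^n (∂ρ_r/∂λ_i) λ_i^{-1} / Δ_i = ρ_{r-1}/ρ_n for r = 1, …, n (with ρ_0 = 1), where ρ_r = (-1)^r σ_r(λ) and Δ_i = ∏_{k≠i}(λ_i - λ_k). -/

import Mathlib

open Finset

/-- The `i`-th elementary symmetric polynomial `σ_i(λ₁,…,λ_n)`. -/
noncomputable def esymmF (n i : ℕ) (l : Fin n → ℝ) : ℝ :=
  ∑ s ∈ Finset.powersetCard i Finset.univ, ∏ j ∈ s, l j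

/-- `e_k` of the variables with index `i` removed. -/
noncomputable def erE (n k : ℕ) (l : Fin n → ℝ) (i : Fin n) : ℝ :=
  ∑ s ∈ Finset.powersetCard k (Finset.univ.erase i), ∏ j ∈ s, l j

lemma key1 (n k : ℕ) (l : Fin n → ℝ) (i : Fin n) (t : ℝ) :
    esymmF n (k+1) (Function.update l i t) = erE n (k+1) l i + t * erE n k l i := by
  unfold esymmF erE
  have hu : (Finset.univ : Finset (Fin n)) = insert i (Finset.univ.erase i) :=
    (Finset.insert_erase (Finset.mem_univ i)).symm
  rw [hu, Finset.powersetCard_succ_insert (Finset.notMem_erase i _)]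
  rw [Finset.erase_insert (Finset.notMem_erase i _), Finset.sum_union]
  · congr 1
    · apply Finset.sum_congr rfl
      intro s hs
      apply Finset.prod_congr rfl
      intro j hj
      have : j ≠ i := by
        intro h; subst h
        exact (Finset.mem_erase.mp ((Finset.mem_powersetCard.mp hs).1 hj)).1 rfl
      simp [Function.update_of_ne this]
    · rw [Finset.sum_image]
      · rw [Finset.mul_sum]
        apply Finset.sum_congr rfl
        intro s hs
        have hi : i ∉ s := fun h =>
          (Finset.mem_erase.mp ((Finset.mem_powersetCard.mp hs).1 h)).1 rfl
        rw [Finset.prod_insert hi, Function.update_self]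
        congr 1
        apply Finset.prod_congr rfl
        intro j hj
        have : j ≠ i := fun h => hi (h ▸ hj)
        simp [Function.update_of_ne this]
      · intro s hs t' ht' h
        have hi : i ∉ s := fun h' =>
          (Finset.mem_erase.mp ((Finset.mem_powersetCard.mp hs).1 h')).1 rfl
        have hi' : i ∉ t' := fun h' =>
          (Finset.mem_erase.mp ((Finset.mem_powersetCard.mp ht').1 h')).1 rfl
        have := congrArg (Finset.erase · i) h
        simpa [Finset.erase_insert hi, Finset.erase_insert hi'] using this
  · rw [Finset.disjoint_right]
    intro s hs hs'
    obtain ⟨t', ht', rfl⟩ := Finset.mem_image.mp hs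
    exact (Finset.mem_erase.mp ((Finset.mem_powersetCard.mp hs').1
      (Finset.mem_insert_self i t'))).1 rfl

/-- `ρ_i = (-1)^i σ_i(λ)`. -/
noncomputable def rho (n i : ℕ) (l : Fin n → ℝ) : ℝ :=
  (-1) ^ i * esymmF n i l

/-- Partial derivative `∂f/∂λ_j` evaluated at `l`. -/
noncomputable def pd (n : ℕ) (f : (Fin n → ℝ) → ℝ) (l : Fin n → ℝ) (j : Fin n) : ℝ :=
  deriv (fun t => f (Function.update l j t)) (l j)

lemma pd_rho (n k : ℕ) (l : Fin n → ℝ) (i : Fin n) :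
    pd n (rho n (k+1)) l i = (-1)^(k+1) * erE n k l i := by
  unfold pd rho
  have h : (fun t => (-1:ℝ)^(k+1) * esymmF n (k+1) (Function.update l i t))
      = fun t => (-1)^(k+1) * (erE n (k+1) l i + t * erE n k l i) := by
    funext t; rw [key1]
  rw [h]
  have : HasDerivAt (fun t : ℝ => (-1:ℝ)^(k+1) * (erE n (k+1) l i + t * erE n k l i))
      ((-1)^(k+1) * erE n k l i) (l i) := by
    have h1 : HasDerivAt (fun t : ℝ => t * erE n k l i) (erE n k l i) (l i) :=
      hasDerivAt_mul_const _
    exact ((h1.const_add _).const_mul _).congr_deriv (by ring)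
  exact this.deriv

lemma esymm_split (n k : ℕ) (l : Fin n → ℝ) (i : Fin n) :
    esymmF n (k+1) l = erE n (k+1) l i + l i * erE n k l i := by
  have := key1 n k l i (l i)
  rwa [Function.update_eq_self] at this

lemma telescope (n : ℕ) (l : Fin n → ℝ) (i : Fin n) (k : ℕ) :
    erE n k l i = ∑ j ∈ Finset.range (k+1), (-1)^j * esymmF n (k-j) l * (l i)^j := by
  induction k with
  | zero =>
      simp [erE, esymmF, Finset.powersetCard_zero]
  | succ k ih =>
      have h := esymm_split n k l i
      have : erE n (k+1) l i = esymmF n (k+1) l - l i * erE n k l i := by linarith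
      rw [this, ih, Finset.sum_range_succ' _ (k+1)]
      simp only [Nat.succ_sub_succ, Nat.sub_zero, pow_zero, one_mul, mul_one]
      have he : ∀ j ∈ Finset.range (k+1), (-1:ℝ)^(j+1) * esymmF n (k-j) l * (l i)^(j+1)
          = -(l i * ((-1)^j * esymmF n (k-j) l * (l i)^j)) := fun j _ => by ring
      rw [Finset.sum_congr rfl he, Finset.sum_neg_distrib, Finset.mul_sum]
      ring

lemma lagrange_id (n : ℕ) (l : Fin n → ℝ) (hl : Function.Injective l) (r : ℕ) (hr : r < n) :
    esymmF n r l = ∑ i, erE n r l i *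
      ∏ j ∈ Finset.univ.erase i, ((l i - l j)⁻¹ * (0 - l j)) := by
  set P : Polynomial ℝ := ∑ j ∈ Finset.range (r+1),
    Polynomial.C ((-1)^j * esymmF n (r-j) l) * Polynomial.X^j with hPdef
  have hdeg : P.degree < ((Finset.univ : Finset (Fin n)).card : WithBot ℕ) := by
    have hcard : ((Finset.univ : Finset (Fin n)).card : WithBot ℕ) = (n : WithBot ℕ) := by simp
    rw [hcard]
    refine lt_of_le_of_lt (Polynomial.degree_sum_le _ _) ?_
    refine (Finset.sup_lt_iff (by exact_mod_cast WithBot.bot_lt_coe n)).mpr ?_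
    intro j hj
    refine lt_of_le_of_lt (Polynomial.degree_C_mul_X_pow_le _ _) ?_
    exact_mod_cast lt_of_le_of_lt (Nat.lt_succ_iff.mp (Finset.mem_range.mp hj)) hr
  have hinj : Set.InjOn l (Finset.univ : Finset (Fin n)) := fun a _ b _ h => hl h
  have h := Lagrange.eq_interpolate hinj hdeg
  have h0 := congrArg (Polynomial.eval 0) h
  have hevalP0 : P.eval 0 = esymmF n r l := by
    rw [hPdef]
    simp only [Polynomial.eval_finset_sum, Polynomial.eval_mul, Polynomial.eval_C,
      Polynomial.eval_pow, Polynomial.eval_X]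
    rw [Finset.sum_eq_single 0]
    · simp
    · intro j _ hj; simp [zero_pow hj]
    · intro h; exact absurd (Finset.mem_range.mpr (Nat.succ_pos r)) h
  have hevalPi : ∀ i, P.eval (l i) = erE n r l i := by
    intro i
    rw [hPdef, telescope]
    simp [Polynomial.eval_finset_sum]
  rw [hevalP0, Lagrange.interpolate_apply] at h0
  rw [h0]
  rw [Polynomial.eval_finset_sum]
  apply Finset.sum_congr rfl
  intro i _
  rw [Polynomial.eval_mul, Polynomial.eval_C, hevalPi]
  congr 1
  unfold Lagrange.basis Lagrange.basisDivisor
  rw [Polynomial.eval_prod]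
  apply Finset.prod_congr rfl
  intro j _
  simp

/-- `Δ_j = ∏_{k≠j} (λ_j - λ_k)`. -/
noncomputable def Delta (n : ℕ) (l : Fin n → ℝ) (j : Fin n) : ℝ :=
  ∏ k ∈ Finset.univ.erase j, (l j - l k)

theorem basic_potential_level_neg_one (n : ℕ) (l : Fin n → ℝ)
    (hl : Function.Injective l) (hnz : ∀ i, l i ≠ 0) (r : Fin n) :
    ∑ i, pd n (rho n ((r : ℕ) + 1)) l i * (l i)⁻¹ / Delta n l i
      = rho n (r : ℕ) l / rho n n l := by
  have hn : n ≠ 0 := by rintro rfl; exact r.elim0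
  obtain ⟨m, rfl⟩ := Nat.exists_eq_succ_of_ne_zero hn
  have hDelta : ∀ i, Delta (m+1) l i ≠ 0 := fun i => by
    unfold Delta
    apply Finset.prod_ne_zero_iff.mpr
    intro k hk
    exact sub_ne_zero.mpr fun h => (Finset.mem_erase.mp hk).1 ((hl h).symm)
  have hprod : (∏ j, l j) ≠ 0 := Finset.prod_ne_zero_iff.mpr fun j _ => hnz j
  have hsq : ((-1:ℝ)^m) * ((-1:ℝ)^m) = 1 := by
    rw [← pow_add]; exact Even.neg_one_pow ⟨m, rfl⟩
  have hen : esymmF (m+1) (m+1) l = ∏ j, l j := by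
    have hc : (Finset.univ : Finset (Fin (m+1))).card = m+1 := by simp
    have hp := Finset.powersetCard_self (Finset.univ : Finset (Fin (m+1)))
    rw [hc] at hp
    unfold esymmF
    rw [hp, Finset.sum_singleton]
  have hL := lagrange_id (m+1) l hl (r : ℕ) r.isLt
  have hprod_i : ∀ i : Fin (m+1), ∏ j ∈ Finset.univ.erase i, ((l i - l j)⁻¹ * (0 - l j))
      = (Delta (m+1) l i)⁻¹ * ((-1)^m * ((∏ j, l j) * (l i)⁻¹)) := by
    intro i
    rw [Finset.prod_mul_distrib]
    congr 1
    · unfold Delta; exact Finset.prod_inv_distrib (fun j => l i - l j)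
    · have hc : (Finset.univ.erase i).card = m := by simp
      calc ∏ j ∈ Finset.univ.erase i, (0 - l j)
          = ∏ j ∈ Finset.univ.erase i, (-1) * l j := by
            apply Finset.prod_congr rfl; intros; ring
        _ = (-1)^m * ∏ j ∈ Finset.univ.erase i, l j := by
            rw [Finset.prod_mul_distrib, Finset.prod_const, hc]
        _ = (-1)^m * ((∏ j, l j) * (l i)⁻¹) := by
            congr 1
            rw [← Finset.mul_prod_erase Finset.univ l (Finset.mem_univ i),
              mul_comm (l i), mul_assoc, mul_inv_cancel₀ (hnz i), mul_one]
  simp only [hprod_i] at hL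
  set S : ℝ := ∑ i, erE (m+1) (r : ℕ) l i * ((l i)⁻¹ * (Delta (m+1) l i)⁻¹) with hS
  have key : S = (-1)^m * esymmF (m+1) (r : ℕ) l * (∏ j, l j)⁻¹ := by
    have h2 : esymmF (m+1) (r : ℕ) l = ((-1)^m * ∏ j, l j) * S := by
      rw [hL, hS, Finset.mul_sum]
      apply Finset.sum_congr rfl
      intros; ring
    rw [h2]
    have h3 : (-1:ℝ)^m * (((-1)^m * ∏ j, l j) * S) * (∏ j, l j)⁻¹
        = (((-1:ℝ)^m * (-1)^m) * ((∏ j, l j) * (∏ j, l j)⁻¹)) * S := by ring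
    rw [h3, hsq, mul_inv_cancel₀ hprod, one_mul, one_mul]
  simp only [pd_rho]
  unfold rho
  rw [hen]
  have hLHS : ∑ i, (-1)^((r:ℕ)+1) * erE (m+1) (r:ℕ) l i * (l i)⁻¹ / Delta (m+1) l i
      = (-1)^((r:ℕ)+1) * S := by
    rw [hS, Finset.mul_sum]
    apply Finset.sum_congr rfl
    intros
    rw [div_eq_mul_inv]; ring
  rw [hLHS, key]
  simp only [Nat.succ_eq_add_one]
  rw [eq_div_iff (show ((-1:ℝ)^(m+1) * ∏ j : Fin (m+1), l j) ≠ 0 from mul_ne_zero (pow_ne_zero _ (by norm_num)) hprod)]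
  have h4 : (-1:ℝ)^((r:ℕ)+1) * ((-1)^m * esymmF (m+1) (r:ℕ) l * (∏ j, l j)⁻¹)
        * ((-1)^(m+1) * ∏ j, l j)
      = (((-1:ℝ)^m * (-1)^m) * ((-1) * (-1))) * ((∏ j, l j) * (∏ j, l j)⁻¹)
        * ((-1)^(r:ℕ) * esymmF (m+1) (r:ℕ) l) := by ring
  rw [h4, hsq, mul_inv_cancel₀ hprod]
  norm_num
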